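/- arXiv:1310.2663 — 2 statements merged into one kernel-verified Lean document; each statement's English description precedes it below -/
import Mathlib

section
/- Let Σ be a locally compact Hausdorff space with a jointly continuous action Θ of the additive group ℝ^d, let F ⊆ Σ be closed with Θ_X(F) ⊆ F for all X, and let f ∈ C₀(Σ, ℂ) vanish at every point of F. Let φ : ℝ^d → ℝ be continuous, compactly supported, nonnegative, with ∫_{ℝ^d} φ = 1. Then for every ε > 0 there exists an open set U ⊆ Σ with F ⊆ U such that for every σ ∈ Σ one has | (∫_{ℝ^d} φ(Y) · 1_U(Θ_{−Y}(σ)) dY) · f(σ) | ≤ ε, where 1_U is the indicator function of U. -/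
set_option maxHeartbeats 1000000


open ZeroAtInfty MeasureTheory

/-- Localization of `C₀` functions vanishing on an invariant set (sup-norm case):
for `f ∈ C₀(Ω, ℂ)` vanishing on the closed invariant set `F` and a nonnegative normalized
mollifier `φ`, there is an open neighborhood `U` of `F` with
`|(φ ∗_Θ 1_U)(σ) · f(σ)| ≤ ε` for all `σ`. -/
theorem exists_open_nhd_mollified_indicator_mul_le
    {d : ℕ} {Ω : Type*} [TopologicalSpace Ω] [LocallyCompactSpace Ω] [T2Space Ω]
    (Θ : (Fin d → ℝ) → Ω → Ω)
    (hΘ : Continuous fun p : (Fin d → ℝ) × Ω => Θ p.1 p.2)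
    (hΘ0 : Θ 0 = id)
    (hΘadd : ∀ X Y : Fin d → ℝ, Θ X ∘ Θ Y = Θ (X + Y))
    (F : Set Ω) (hF : IsClosed F) (hFinv : ∀ X : Fin d → ℝ, Θ X '' F ⊆ F)
    (f : C₀(Ω, ℂ)) (hfF : ∀ σ ∈ F, f σ = 0)
    (φ : (Fin d → ℝ) → ℝ) (hφ : Continuous φ) (hφc : HasCompactSupport φ)
    (hφ0 : ∀ Y, 0 ≤ φ Y) (hφ1 : ∫ Y : Fin d → ℝ, φ Y = 1)
    (ε : ℝ) (hε : 0 < ε) :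
    ∃ U : Set Ω, IsOpen U ∧ F ⊆ U ∧ ∀ σ : Ω,
      ‖(∫ Y : Fin d → ℝ, φ Y * U.indicator (fun _ => (1 : ℝ)) (Θ (-Y) σ)) • f σ‖ ≤ ε := by
  classical
  set K : Set (Fin d → ℝ) := tsupport φ with hK
  have hKc : IsCompact K := hφc
  set V : Set Ω := {τ | ∀ Y ∈ K, ‖f (Θ Y τ)‖ < ε} with hV
  -- the "bad" open set in the product
  have hn : IsOpen {p : (Fin d → ℝ) × Ω | ‖f (Θ p.1 p.2)‖ < ε} := by
    have hc : Continuous fun p : (Fin d → ℝ) × Ω => ‖f (Θ p.1 p.2)‖ :=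
      (f.continuous.comp hΘ).norm
    exact isOpen_lt hc continuous_const
  have hVopen : IsOpen V := by
    rw [isOpen_iff_mem_nhds]
    intro τ hτ
    obtain ⟨u, v, hu, hv, hKu, hτv, huv⟩ :=
      generalized_tube_lemma hKc isCompact_singleton hn
        (by
          rintro ⟨Y, σ⟩ ⟨hY, hσ⟩
          rcases hσ with rfl
          exact hτ Y hY)
    refine Filter.mem_of_superset (hv.mem_nhds (hτv rfl)) ?_
    intro σ hσ Y hY
    exact huv (Set.mk_mem_prod (hKu hY) hσ)
  have hFV : F ⊆ V := by
    intro τ hτ Y _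
    have : Θ Y τ ∈ F := hFinv Y ⟨τ, hτ, rfl⟩
    rw [hfF _ this, norm_zero]; exact hε
  refine ⟨V, hVopen, hFV, ?_⟩
  intro σ
  by_cases h : ∃ Y ∈ K, Θ (-Y) σ ∈ V
  · obtain ⟨Y, hYK, hYV⟩ := h
    have heq : Θ Y (Θ (-Y) σ) = σ := by
      have h1 := congrFun (hΘadd Y (-Y)) σ
      simpa [hΘ0] using h1
    have hfσ : ‖f σ‖ ≤ ε := by
      have := hYV Y hYK
      rw [heq] at this
      exact this.le
    have hI0 : 0 ≤ ∫ Y : Fin d → ℝ, φ Y * V.indicator (fun _ => (1 : ℝ)) (Θ (-Y) σ) := by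
      refine integral_nonneg fun Y => ?_
      exact mul_nonneg (hφ0 Y) (Set.indicator_nonneg (fun _ _ => zero_le_one) _)
    have hI1 : (∫ Y : Fin d → ℝ, φ Y * V.indicator (fun _ => (1 : ℝ)) (Θ (-Y) σ)) ≤ 1 := by
      have hle : (∫ Y : Fin d → ℝ, φ Y * V.indicator (fun _ => (1 : ℝ)) (Θ (-Y) σ))
          ≤ ∫ Y : Fin d → ℝ, φ Y := by
        refine integral_mono_of_nonneg (Filter.Eventually.of_forall fun Y =>
          mul_nonneg (hφ0 Y) (Set.indicator_nonneg (fun _ _ => zero_le_one) _))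
          (hφ.integrable_of_hasCompactSupport hφc)
          (Filter.Eventually.of_forall fun Y => ?_)
        have hind : V.indicator (fun _ => (1 : ℝ)) (Θ (-Y) σ) ≤ 1 := by
          by_cases hm : Θ (-Y) σ ∈ V <;> simp [hm]
        calc φ Y * V.indicator (fun _ => (1 : ℝ)) (Θ (-Y) σ) ≤ φ Y * 1 :=
              mul_le_mul_of_nonneg_left hind (hφ0 Y)
          _ = φ Y := mul_one _
      rw [hφ1] at hle
      exact hle
    rw [norm_smul, Real.norm_of_nonneg hI0]
    calc (∫ Y : Fin d → ℝ, φ Y * V.indicator (fun _ => (1 : ℝ)) (Θ (-Y) σ)) * ‖f σ‖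
        ≤ 1 * ε := mul_le_mul hI1 hfσ (norm_nonneg _) zero_le_one
      _ = ε := one_mul ε
  · have hzero : ∀ Y : Fin d → ℝ, φ Y * V.indicator (fun _ => (1 : ℝ)) (Θ (-Y) σ) = 0 := by
      intro Y
      by_cases hY : φ Y = 0
      · simp [hY]
      · have hYK : Y ∈ K := subset_tsupport φ hY
        have : Θ (-Y) σ ∉ V := fun hmem => h ⟨Y, hYK, hmem⟩
        simp [Set.indicator_of_notMem this]
    simp only [hzero, integral_zero, zero_smul, norm_zero]
    exact hε.le
end

section
/- Let n ≥ 1 and let T : L²(ℝⁿ, ℂ) → L²(ℝⁿ, ℂ) be a compact continuous linear operator (with respect to Lebesgue measure). Then for every ε > 0 there exists R > 0 such that for every u ∈ L²(ℝⁿ, ℂ), the L²-norm of the truncation of T u outside the ball of radius R is at most ε‖u‖; that is, eLpNorm ({x : ℝⁿ | R < ‖x‖}.indicator of (a representative of) T u) 2 ≤ ENNReal.ofReal (ε · ‖u‖). -/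
/-!
Write `χ_R` for the indicator of `{R < ‖x‖}`. For a single `f ∈ L²` the tail `‖χ_R f‖` tends
to `0`, since `f` is `L²`-close to a compactly supported function. Because `f ↦ ‖χ_R f‖` is
`1`-Lipschitz for every `R`, this convergence is uniform on totally bounded sets (check it on a
finite net). A compact operator maps the unit ball into a compact set, and homogeneity gives the
bound `ε‖u‖` for all `u`.
-/

open MeasureTheory Filter Topology
open scoped ENNReal

namespace MeasureTheory

variable {α E : Type*} [MeasurableSpace α] {μ : Measure α} [NormedAddCommGroup E]
  {p : ℝ≥0∞} {s : Set α}

theorem eLpNorm_indicator_le_add_eLpNorm_sub (hp : 1 ≤ p) (hs : MeasurableSet s) {f g : α → E}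
    (hf : AEStronglyMeasurable f μ) (hg : AEStronglyMeasurable g μ) :
    eLpNorm (s.indicator f) p μ ≤ eLpNorm (s.indicator g) p μ + eLpNorm (f - g) p μ := by
  calc eLpNorm (s.indicator f) p μ
      = eLpNorm (s.indicator g + s.indicator (f - g)) p μ := by
        rw [← Set.indicator_add', add_sub_cancel]
    _ ≤ eLpNorm (s.indicator g) p μ + eLpNorm (s.indicator (f - g)) p μ :=
        eLpNorm_add_le (hg.indicator hs) ((hf.sub hg).indicator hs) hp
    _ ≤ eLpNorm (s.indicator g) p μ + eLpNorm (f - g) p μ := by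
        gcongr
        exact eLpNorm_indicator_le _

theorem Lp.eLpNorm_indicator_smul {𝕜 : Type*} [NormedDivisionRing 𝕜] [Module 𝕜 E]
    [NormSMulClass 𝕜 E] (c : 𝕜) (f : Lp E p μ) :
    eLpNorm (s.indicator ⇑(c • f)) p μ = ‖c‖ₑ * eLpNorm (s.indicator f) p μ := by
  rw [eLpNorm_congr_ae (Lp.coeFn_smul c f).indicator, ← eLpNorm_const_smul]
  exact congrArg (eLpNorm · p μ) (Set.indicator_const_smul s c f)

theorem eventually_forall_eLpNorm_indicator_le_of_totallyBounded [Fact (1 ≤ p)]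
    {ι : Type*} {l : Filter ι} {S : ι → Set α} (hS : ∀ i, MeasurableSet (S i))
    (htail : ∀ f : Lp E p μ, Tendsto (fun i ↦ eLpNorm ((S i).indicator f) p μ) l (𝓝 0))
    {K : Set (Lp E p μ)} (hK : TotallyBounded K) {ε : ℝ≥0∞} (hε : 0 < ε) :
    ∀ᶠ i in l, ∀ f ∈ K, eLpNorm ((S i).indicator f) p μ ≤ ε := by
  obtain ⟨t, ht, hKt⟩ := EMetric.totallyBounded_iff.1 hK (ε / 2) (ENNReal.half_pos hε.ne')
  have hnet : ∀ᶠ i in l, ∀ g ∈ t, eLpNorm ((S i).indicator g) p μ ≤ ε / 2 :=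
    (ht.eventually_all).2 fun g _ ↦
      ENNReal.tendsto_nhds_zero.1 (htail g) _ (ENNReal.half_pos hε.ne')
  filter_upwards [hnet] with i hi f hf
  obtain ⟨g, hgt, hfg⟩ := Set.mem_iUnion₂.1 (hKt hf)
  calc eLpNorm ((S i).indicator f) p μ
      ≤ eLpNorm ((S i).indicator g) p μ + eLpNorm (⇑f - ⇑g) p μ :=
        eLpNorm_indicator_le_add_eLpNorm_sub Fact.out (hS i) (Lp.aestronglyMeasurable f)
          (Lp.aestronglyMeasurable g)
    _ ≤ ε / 2 + ε / 2 := by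
        gcongr
        · exact hi g hgt
        · rw [← Lp.edist_def]
          exact (Metric.mem_eball.1 hfg).le
    _ = ε := ENNReal.add_halves ε

end MeasureTheory

namespace MeasureTheory.MemLp

variable {α E : Type*} [NormedAddCommGroup α] [ProperSpace α] [MeasurableSpace α] [BorelSpace α]
  {μ : Measure α} [μ.Regular] [NormedAddCommGroup E] [NormedSpace ℝ E] {p : ℝ≥0∞}

theorem tendsto_eLpNorm_indicator_norm_gt (hp₁ : 1 ≤ p) (hp : p ≠ ∞) {f : α → E}
    (hf : MemLp f p μ) :
    Tendsto (fun R : ℝ ↦ eLpNorm ({x | R < ‖x‖}.indicator f) p μ) atTop (𝓝 0) := by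
  refine ENNReal.tendsto_nhds_zero.2 fun ε hε ↦ ?_
  obtain ⟨g, hg_supp, hfg, hg_cont, -⟩ := hf.exists_hasCompactSupport_eLpNorm_sub_le hp hε.ne'
  obtain ⟨R₀, hR₀⟩ := hg_supp.isCompact.isBounded.subset_closedBall 0
  filter_upwards [eventually_ge_atTop R₀] with R hR
  have hg_tail : {x | R < ‖x‖}.indicator g = 0 := by
    refine Set.indicator_eq_zero'.2 (Set.disjoint_left.2 fun x hx hxR ↦ ?_)
    have hx₀ : ‖x‖ ≤ R₀ := mem_closedBall_zero_iff.1 (hR₀ (subset_tsupport g hx))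
    exact (hx₀.trans hR).not_gt hxR
  calc eLpNorm ({x | R < ‖x‖}.indicator f) p μ
      ≤ eLpNorm ({x | R < ‖x‖}.indicator g) p μ + eLpNorm (f - g) p μ :=
        eLpNorm_indicator_le_add_eLpNorm_sub hp₁ (measurableSet_lt measurable_const
          measurable_norm) hf.aestronglyMeasurable hg_cont.aestronglyMeasurable
    _ ≤ ε := by simpa [hg_tail] using hfg

end MeasureTheory.MemLp

theorem compactOperator_localization_general
    {n : ℕ}
    (T : Lp ℂ 2 (volume : Measure (EuclideanSpace ℝ (Fin n))) →L[ℂ]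
         Lp ℂ 2 (volume : Measure (EuclideanSpace ℝ (Fin n))))
    (hT : IsCompactOperator T) :
    ∀ ε > (0 : ℝ), ∃ R > (0 : ℝ),
      ∀ u : Lp ℂ 2 (volume : Measure (EuclideanSpace ℝ (Fin n))),
        eLpNorm ({x : EuclideanSpace ℝ (Fin n) | R < ‖x‖}.indicator
            (T u : EuclideanSpace ℝ (Fin n) → ℂ)) 2 volume ≤
          ENNReal.ofReal (ε * ‖u‖) := by
  intro ε hε
  obtain ⟨K, hK, hTK⟩ := hT.image_closedBall_subset_compact 1
  obtain ⟨R, hR, hR₀⟩ := ((eventually_forall_eLpNorm_indicator_le_of_totallyBounded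
    (fun R ↦ measurableSet_lt measurable_const measurable_norm)
    (fun f ↦ (Lp.memLp f).tendsto_eLpNorm_indicator_norm_gt one_le_two ENNReal.ofNat_ne_top)
    hK.totallyBounded (ENNReal.ofReal_pos.2 hε)).and (eventually_gt_atTop 0)).exists
  refine ⟨R, hR₀, fun u ↦ ?_⟩
  have hv : ‖(‖u‖⁻¹ : ℂ) • u‖ ≤ 1 := by
    rw [norm_smul, norm_inv, Complex.norm_real, norm_norm]
    exact inv_mul_le_one_of_le₀ le_rfl (norm_nonneg u)
  have hu : T u = (‖u‖ : ℂ) • T ((‖u‖⁻¹ : ℂ) • u) := by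
    rcases eq_or_ne u 0 with rfl | hu₀
    · simp
    · rw [← map_smul, smul_inv_smul₀ (by simpa using hu₀)]
  set v := (‖u‖⁻¹ : ℂ) • u
  calc eLpNorm ({x : EuclideanSpace ℝ (Fin n) | R < ‖x‖}.indicator
          (T u : EuclideanSpace ℝ (Fin n) → ℂ)) 2 volume
      = ‖(‖u‖ : ℂ)‖ₑ * eLpNorm ({x : EuclideanSpace ℝ (Fin n) | R < ‖x‖}.indicator
          (T v : EuclideanSpace ℝ (Fin n) → ℂ)) 2 volume := by
        rw [hu, Lp.eLpNorm_indicator_smul]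
    _ ≤ ‖u‖ₑ * ENNReal.ofReal ε := by
        gcongr
        · rw [← ofReal_norm, ← ofReal_norm, Complex.norm_real, norm_norm]
        · exact hR _ (hTK ⟨v, mem_closedBall_zero_iff.2 hv, rfl⟩)
    _ = ENNReal.ofReal (ε * ‖u‖) := by
        rw [← ofReal_norm, ← ENNReal.ofReal_mul (norm_nonneg u), mul_comm]

/-- States localized by a compact operator on `L²(ℝⁿ)` cannot propagate to spatial infinity:
for every `ε > 0` there is `R > 0` such that the part of `T u` outside the ball of radius
`R` has `L²`-norm at most `ε‖u‖`. -/
theorem compactOperator_localization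
    {n : ℕ} (hn : 1 ≤ n)
    (T : Lp ℂ 2 (volume : Measure (EuclideanSpace ℝ (Fin n))) →L[ℂ]
         Lp ℂ 2 (volume : Measure (EuclideanSpace ℝ (Fin n))))
    (hT : IsCompactOperator T) :
    ∀ ε > (0 : ℝ), ∃ R > (0 : ℝ),
      ∀ u : Lp ℂ 2 (volume : Measure (EuclideanSpace ℝ (Fin n))),
        eLpNorm ({x : EuclideanSpace ℝ (Fin n) | R < ‖x‖}.indicator
            (T u : EuclideanSpace ℝ (Fin n) → ℂ)) 2 volume ≤
          ENNReal.ofReal (ε * ‖u‖) :=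
  compactOperator_localization_general T hT
end
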